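/- Let G be a finite simple graph and S a self disjoint set in G (regarded as a 2-uniform simple hypergraph) of type (i, i+j), i.e. S consists of i edges whose union has i + j vertices. Then there exists a strongly disjoint set of bouquets {B_1, …, B_j} of G of type (i, j) whose set of stems is exactly S. -/

import Mathlib

variable {V : Type*} [DecidableEq V] [Fintype V]

/-- The union of a family of edges. -/
def unionEdges (M : Finset (Finset V)) : Finset V := M.biUnion id

/-- `E` is the edge set of a simple hypergraph: every edge has at least two
vertices and no edge is contained in another distinct edge. -/
def IsSimpleHypergraph (E : Finset (Finset V)) : Prop :=
  (∀ S ∈ E, 2 ≤ S.card) ∧ ∀ S ∈ E, ∀ T ∈ E, S ⊆ T → S = T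

/-- A family `M` of edges of `E` is a semi-induced matching if no edge of `E`
outside `M` is contained in the union of the members of `M`. -/
def IsSemiInducedMatching (E M : Finset (Finset V)) : Prop :=
  M ⊆ E ∧ ∀ S ∈ E, S ∉ M → ¬ S ⊆ unionEdges M

/-- An induced matching is a semi-induced matching whose edges are pairwise disjoint. -/
def IsInducedMatching (E M : Finset (Finset V)) : Prop :=
  IsSemiInducedMatching E M ∧ ∀ S ∈ M, ∀ T ∈ M, S ≠ T → Disjoint S T

/-- A self semi-induced matching is a semi-induced matching in which no member
is contained in the union of the other members. -/
def IsSelfSemiInducedMatching (E M : Finset (Finset V)) : Prop :=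
  IsSemiInducedMatching E M ∧ ∀ S ∈ M, ¬ S ⊆ unionEdges (M.erase S)

/-- A self-contained semi-induced matching. -/
def IsSelfContainedSemiInducedMatching (E M : Finset (Finset V)) : Prop :=
  M ⊆ E ∧
  (∀ S ∈ E, S ∉ M → ¬ S ⊆ unionEdges M ∨ ∃ T ∈ M, T ⊆ S ∪ unionEdges (M.erase T)) ∧
  ∀ S ∈ M, ¬ S ⊆ unionEdges (M.erase S)

/-- A self disjoint set of edges. -/
def IsSelfDisjointSet (E M : Finset (Finset V)) : Prop :=
  M ⊆ E ∧ (∀ S ∈ M, ¬ S ⊆ unionEdges (M.erase S)) ∧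
  ∃ M₀ ⊆ M, IsInducedMatching E M₀ ∧
    ∀ S ∈ M, S ∉ M₀ → ∃ T ∈ M₀, (S \ T).card = 1

/-- A self semi-disjoint set of edges. -/
def IsSelfSemiDisjointSet (E M : Finset (Finset V)) : Prop :=
  M ⊆ E ∧ (∀ S ∈ M, ¬ S ⊆ unionEdges (M.erase S)) ∧
  ∃ M₀ ⊆ M, IsSemiInducedMatching E M₀ ∧
    ∀ S ∈ M, S ∉ M₀ → ∃ T ∈ M₀, (S \ T).card = 1

/-- A bouquet of the (2-uniform) graph with edge set `E`, given by its root `b.1`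
and its nonempty set of flowers `b.2`; its stems must be edges of `E`. -/
def IsBouquet (E : Finset (Finset V)) (b : V × Finset V) : Prop :=
  b.2.Nonempty ∧ b.1 ∉ b.2 ∧ ∀ y ∈ b.2, ({b.1, y} : Finset V) ∈ E

/-- The vertex set of a bouquet. -/
def bouquetVerts (b : V × Finset V) : Finset V := insert b.1 b.2

/-- The set of stems of a bouquet. -/
def stems (b : V × Finset V) : Finset (Finset V) :=
  b.2.image fun y => ({b.1, y} : Finset V)

/-- A strongly disjoint set of bouquets: the vertex sets of the bouquets are
pairwise disjoint and one can choose one stem from each bouquet such that the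
chosen stems form an induced matching. -/
def IsStronglyDisjointBouquets (E : Finset (Finset V)) (B : Finset (V × Finset V)) : Prop :=
  (∀ b ∈ B, IsBouquet E b) ∧
  (∀ b ∈ B, ∀ b' ∈ B, b ≠ b' → Disjoint (bouquetVerts b) (bouquetVerts b')) ∧
  ∃ f : V × Finset V → V, (∀ b ∈ B, f b ∈ b.2) ∧
    IsInducedMatching E (B.image fun b => ({b.1, f b} : Finset V))

/-!
Every edge of `M` has a private vertex, so an edge `T` of the induced matching `M₀` meets the other
edges of `M` in at most one vertex; pick such a vertex as the root of `T`. An edge of `M` outside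
`M₀` meets some `T ∈ M₀`, hence passes through its root, and no edge of `M` contains two roots. The
edges of `M` through a root form a bouquet; these bouquets have pairwise disjoint vertex sets, their
stems are exactly the edges of `M`, and the edges of `M₀` are chosen stems forming an induced
matching. Finally `j'` bouquets with `i` flowers in total and disjoint vertex sets cover `i + j'`
vertices, which forces `j' = j`.
-/

open Finset

section

variable {α : Type*} [DecidableEq α]

lemma eq_pair_of_card_eq_two {s : Finset α} {x y : α} (hs : s.card = 2) (hx : x ∈ s) (hy : y ∈ s)
    (hxy : x ≠ y) : s = {x, y} :=
  (eq_of_subset_of_card_le (insert_subset hx (singleton_subset_iff.mpr hy))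
    (by rw [card_pair hxy, hs])).symm

lemma card_inter_le_one_of_not_subset {T U : Finset α} (hT : T.card = 2) (hTU : ¬ T ⊆ U) :
    (T ∩ U).card ≤ 1 := by
  by_contra h
  exact hTU (inter_eq_left.mp (eq_of_subset_of_card_le inter_subset_left (by omega)))

lemma exists_inter_subset_singleton {T U : Finset α} (hT : T.card = 2) (hTU : ¬ T ⊆ U) :
    ∃ r ∈ T, T ∩ U ⊆ {r} := by
  rcases (T ∩ U).eq_empty_or_nonempty with h | ⟨r, hr⟩
  · obtain ⟨r, hr⟩ := card_pos.mp (by omega : 0 < T.card)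
    exact ⟨r, hr, h ▸ empty_subset _⟩
  · exact ⟨r, (mem_inter.mp hr).1, fun v hv =>
      mem_singleton.mpr (card_le_one.mp (card_inter_le_one_of_not_subset hT hTU) v hv r hr)⟩

lemma mem_unionEdges {N : Finset (Finset α)} {v : α} : v ∈ unionEdges N ↔ ∃ S ∈ N, v ∈ S := by
  simp [unionEdges]

section Bouquets

variable {b : α × Finset α}

lemma card_stems (hb : b.1 ∉ b.2) : (stems b).card = b.2.card := by
  refine card_image_of_injOn fun y hy y' hy' h => ?_
  have hyr : y ≠ b.1 := fun e => hb (e ▸ hy)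
  have : y ∈ ({b.1, y'} : Finset α) := h ▸ mem_insert_of_mem (mem_singleton_self y)
  simpa [hyr] using this

lemma unionEdges_stems (hb : b.2.Nonempty) : unionEdges (stems b) = bouquetVerts b := by
  ext v
  simp only [mem_unionEdges, stems, bouquetVerts, mem_image, exists_exists_and_eq_and, mem_insert,
    mem_singleton]
  grind

lemma fst_mem_of_mem_stems {S : Finset α} (hS : S ∈ stems b) : b.1 ∈ S := by
  obtain ⟨y, -, rfl⟩ := mem_image.mp hS
  exact mem_insert_self _ _

lemma subset_bouquetVerts_of_mem_stems {S : Finset α} (hS : S ∈ stems b) : S ⊆ bouquetVerts b := by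
  obtain ⟨y, hy, rfl⟩ := mem_image.mp hS
  exact insert_subset_insert _ (singleton_subset_iff.mpr hy)

variable {B : Finset (α × Finset α)}

lemma sum_card_flowers (hroot : ∀ b ∈ B, b.1 ∉ b.2)
    (hdisj : (B : Set (α × Finset α)).PairwiseDisjoint bouquetVerts) :
    ∑ b ∈ B, b.2.card = (B.biUnion stems).card := by
  rw [card_biUnion]
  · exact sum_congr rfl fun b hb => (card_stems (hroot b hb)).symm
  · intro b hb b' hb' hne
    exact disjoint_left.mpr fun S hS hS' => disjoint_left.mp (hdisj hb hb' hne)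
      (mem_insert_self _ _) (subset_bouquetVerts_of_mem_stems hS' (fst_mem_of_mem_stems hS))

lemma card_unionEdges_biUnion_stems (hflowers : ∀ b ∈ B, b.2.Nonempty)
    (hroot : ∀ b ∈ B, b.1 ∉ b.2)
    (hdisj : (B : Set (α × Finset α)).PairwiseDisjoint bouquetVerts) :
    (unionEdges (B.biUnion stems)).card = ∑ b ∈ B, b.2.card + B.card := by
  have hverts : unionEdges (B.biUnion stems) = B.biUnion bouquetVerts := by
    rw [unionEdges, biUnion_biUnion]
    exact biUnion_congr rfl fun b hb => unionEdges_stems (hflowers b hb)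
  rw [hverts, card_biUnion hdisj, card_eq_sum_ones B, ← sum_add_distrib]
  exact sum_congr rfl fun b hb => card_insert_of_notMem (hroot b hb)

lemma exists_choice_of_existsUnique_stem {N : Finset (Finset α)}
    (hB : ∀ b ∈ B, ∃! S, S ∈ stems b ∧ S ∈ N) (hN : N ⊆ B.biUnion stems) :
    ∃ f : α × Finset α → α, (∀ b ∈ B, f b ∈ b.2) ∧ B.image (fun b => {b.1, f b}) = N := by
  classical
  let f : α × Finset α → α := fun b => if h : ∃ y ∈ b.2, {b.1, y} ∈ N then h.choose else b.1
  have hf : ∀ b ∈ B, f b ∈ b.2 ∧ {b.1, f b} ∈ N := by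
    intro b hb
    obtain ⟨S, ⟨hS, hSN⟩, -⟩ := hB b hb
    obtain ⟨y, hy, rfl⟩ := mem_image.mp hS
    have h : ∃ y ∈ b.2, {b.1, y} ∈ N := ⟨y, hy, hSN⟩
    simpa only [f, dif_pos h] using h.choose_spec
  refine ⟨f, fun b hb => (hf b hb).1, ?_⟩
  ext T
  simp only [mem_image]
  constructor
  · rintro ⟨b, hb, rfl⟩
    exact (hf b hb).2
  · intro hT
    obtain ⟨b, hb, hTb⟩ := mem_biUnion.mp (hN hT)
    exact ⟨b, hb, (hB b hb).unique ⟨mem_image_of_mem _ (hf b hb).1, (hf b hb).2⟩ ⟨hTb, hT⟩⟩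

end Bouquets

def incidentEdges (M : Finset (Finset α)) (r : α) : Finset (Finset α) := M.filter (r ∈ ·)

def bouquetAt (M : Finset (Finset α)) (r : α) : α × Finset α :=
  (r, (unionEdges (incidentEdges M r)).erase r)

section IncidentEdges

variable {M : Finset (Finset α)} {r : α}

lemma mem_incidentEdges {S : Finset α} : S ∈ incidentEdges M r ↔ S ∈ M ∧ r ∈ S := mem_filter

lemma stems_bouquetAt (hcard : ∀ S ∈ M, S.card = 2) (r : α) :
    stems (bouquetAt M r) = incidentEdges M r := by
  ext S
  simp only [stems, bouquetAt, mem_image, mem_erase, mem_unionEdges, mem_incidentEdges]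
  constructor
  · rintro ⟨y, ⟨hyr, S', ⟨hS'M, hrS'⟩, hyS'⟩, rfl⟩
    rw [← eq_pair_of_card_eq_two (hcard S' hS'M) hrS' hyS' (Ne.symm hyr)]
    exact ⟨hS'M, hrS'⟩
  · rintro ⟨hSM, hrS⟩
    obtain ⟨y, hy⟩ : (S.erase r).Nonempty := by
      rw [← card_pos, card_erase_of_mem hrS, hcard S hSM]
      omega
    have hyS := mem_of_mem_erase hy
    exact ⟨y, ⟨ne_of_mem_erase hy, S, ⟨hSM, hrS⟩, hyS⟩,
      (eq_pair_of_card_eq_two (hcard S hSM) hrS hyS (ne_of_mem_erase hy).symm).symm⟩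

lemma bouquetVerts_bouquetAt (hr : (incidentEdges M r).Nonempty) :
    bouquetVerts (bouquetAt M r) = unionEdges (incidentEdges M r) := by
  obtain ⟨S, hS⟩ := hr
  exact insert_erase (mem_unionEdges.mpr ⟨S, hS, (mem_incidentEdges.mp hS).2⟩)

lemma isBouquet_bouquetAt {E : Finset (Finset α)} (hME : M ⊆ E) (hcard : ∀ S ∈ M, S.card = 2)
    (hr : (incidentEdges M r).Nonempty) : IsBouquet E (bouquetAt M r) := by
  have hroot : r ∉ (bouquetAt M r).2 := notMem_erase r _
  refine ⟨card_pos.mp ?_, hroot, fun y hy => hME ((mem_incidentEdges (r := r)).mp ?_).1⟩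
  · rw [← card_stems hroot, stems_bouquetAt hcard]
    exact hr.card_pos
  · exact stems_bouquetAt hcard r ▸ mem_image_of_mem _ hy

end IncidentEdges

def IsRootSet (M M₀ : Finset (Finset α)) (R : Finset α) : Prop :=
  (∀ T ∈ M₀, ∃ r, R ∩ T = {r} ∧ T ∩ unionEdges (M.erase T) ⊆ {r}) ∧ R ⊆ unionEdges M₀

lemma exists_isRootSet {M M₀ : Finset (Finset α)} (hcard : ∀ S ∈ M, S.card = 2)
    (hpriv : ∀ S ∈ M, ¬ S ⊆ unionEdges (M.erase S)) (hM₀M : M₀ ⊆ M)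
    (hdisj : ∀ S ∈ M₀, ∀ T ∈ M₀, S ≠ T → Disjoint S T) : ∃ R, IsRootSet M M₀ R := by
  choose root hroot_mem hroot using fun T (hT : T ∈ M₀) =>
    exists_inter_subset_singleton (hcard T (hM₀M hT)) (hpriv T (hM₀M hT))
  refine ⟨M₀.attach.image fun T => root T.1 T.2, fun T hT => ⟨root T hT, ?_, hroot T hT⟩, ?_⟩
  · ext v
    simp only [mem_inter, mem_image, mem_attach, true_and, Subtype.exists, mem_singleton]
    constructor
    · rintro ⟨⟨T', hT', rfl⟩, hvT⟩
      obtain rfl : T' = T := by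
        by_contra hne
        exact disjoint_left.mp (hdisj T' hT' T hT hne) (hroot_mem T' hT') hvT
      rfl
    · rintro rfl
      exact ⟨⟨T, hT, rfl⟩, hroot_mem T hT⟩
  · intro v hv
    obtain ⟨⟨T, hT⟩, -, rfl⟩ := mem_image.mp hv
    exact mem_unionEdges.mpr ⟨T, hT, hroot_mem T hT⟩

namespace IsRootSet

variable {M M₀ : Finset (Finset α)} {R : Finset α} {r r' : α} {S T : Finset α}

lemma exists_mem_edge (hR : IsRootSet M M₀ R) (hr : r ∈ R) :
    ∃ T ∈ M₀, r ∈ T ∧ T ∩ unionEdges (M.erase T) ⊆ {r} := by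
  obtain ⟨T, hT, hrT⟩ := mem_unionEdges.mp (hR.2 hr)
  obtain ⟨r₀, hRT, hT₀⟩ := hR.1 T hT
  obtain rfl : r = r₀ := mem_singleton.mp (hRT ▸ mem_inter.mpr ⟨hr, hrT⟩)
  exact ⟨T, hT, hrT, hT₀⟩

lemma eq_of_mem_of_mem₀ (hR : IsRootSet M M₀ R) (hT : T ∈ M₀) (hr : r ∈ R) (hr' : r' ∈ R)
    (hrT : r ∈ T) (hr'T : r' ∈ T) : r = r' := by
  obtain ⟨r₀, hRT, -⟩ := hR.1 T hT
  have h : r ∈ R ∩ T ∧ r' ∈ R ∩ T := ⟨mem_inter.mpr ⟨hr, hrT⟩, mem_inter.mpr ⟨hr', hr'T⟩⟩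
  rw [hRT, mem_singleton, mem_singleton] at h
  exact h.1.trans h.2.symm

lemma incidentEdges_nonempty (hR : IsRootSet M M₀ R) (hM₀M : M₀ ⊆ M) (hr : r ∈ R) :
    (incidentEdges M r).Nonempty := by
  obtain ⟨T, hT, hrT, -⟩ := hR.exists_mem_edge hr
  exact ⟨T, mem_incidentEdges.mpr ⟨hM₀M hT, hrT⟩⟩

lemma exists_root_mem (hR : IsRootSet M M₀ R) (hcard : ∀ S ∈ M, S.card = 2)
    (hatt : ∀ S ∈ M, S ∉ M₀ → ∃ T ∈ M₀, (S \ T).card = 1) (hS : S ∈ M) : ∃ r ∈ R, r ∈ S := by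
  by_cases hS₀ : S ∈ M₀
  · obtain ⟨r, hRS, -⟩ := hR.1 S hS₀
    exact ⟨r, mem_inter.mp (hRS ▸ mem_singleton_self r)⟩
  obtain ⟨T, hT, hST⟩ := hatt S hS hS₀
  obtain ⟨r, hRT, hTr⟩ := hR.1 T hT
  obtain ⟨v, hv⟩ : (S ∩ T).Nonempty := by
    rw [← card_pos]
    have := card_sdiff_add_card_inter S T
    have := hcard S hS
    omega
  have hvU : v ∈ unionEdges (M.erase T) :=
    mem_unionEdges.mpr ⟨S, mem_erase.mpr ⟨fun h => hS₀ (h ▸ hT), hS⟩, (mem_inter.mp hv).1⟩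
  obtain rfl := mem_singleton.mp (hTr (mem_inter.mpr ⟨(mem_inter.mp hv).2, hvU⟩))
  exact ⟨v, (mem_inter.mp (hRT ▸ mem_singleton_self v)).1, (mem_inter.mp hv).1⟩

lemma eq_of_mem_of_mem (hR : IsRootSet M M₀ R) (hcard : ∀ S ∈ M, S.card = 2)
    (hpriv : ∀ S ∈ M, ¬ S ⊆ unionEdges (M.erase S)) (hM₀M : M₀ ⊆ M) (hS : S ∈ M)
    (hr : r ∈ R) (hr' : r' ∈ R) (hrS : r ∈ S) (hr'S : r' ∈ S) : r = r' := by
  obtain ⟨T, hT, hrT, -⟩ := hR.exists_mem_edge hr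
  obtain ⟨T', hT', hr'T', -⟩ := hR.exists_mem_edge hr'
  by_cases hr'T : r' ∈ T
  · exact hR.eq_of_mem_of_mem₀ hT hr hr' hrT hr'T
  by_cases hrT' : r ∈ T'
  · exact hR.eq_of_mem_of_mem₀ hT' hr hr' hrT' hr'T'
  have hTS : T ≠ S := fun h => hr'T (h ▸ hr'S)
  have hT'S : T' ≠ S := fun h => hrT' (h ▸ hrS)
  refine card_le_one.mp (card_inter_le_one_of_not_subset (hcard S hS) (hpriv S hS)) r ?_ r' ?_
  · exact mem_inter.mpr ⟨hrS, mem_unionEdges.mpr ⟨T, mem_erase.mpr ⟨hTS, hM₀M hT⟩, hrT⟩⟩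
  · exact mem_inter.mpr ⟨hr'S, mem_unionEdges.mpr ⟨T', mem_erase.mpr ⟨hT'S, hM₀M hT'⟩, hr'T'⟩⟩

lemma mem_of_mem_incidentEdges (hR : IsRootSet M M₀ R) (hcard : ∀ S ∈ M, S.card = 2)
    (hpriv : ∀ S ∈ M, ¬ S ⊆ unionEdges (M.erase S)) (hM₀M : M₀ ⊆ M) (hr : r ∈ R)
    (hS : S ∈ incidentEdges M r) {S' : Finset α} (hS' : S' ∈ M) {v : α} (hvS : v ∈ S)
    (hvS' : v ∈ S') : r ∈ S' := by
  obtain ⟨hSM, hrS⟩ := mem_incidentEdges.mp hS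
  obtain ⟨T, hT, hrT, hTr⟩ := hR.exists_mem_edge hr
  by_contra hrS'
  have hvU : v ∈ S ∩ unionEdges (M.erase S) :=
    mem_inter.mpr ⟨hvS, mem_unionEdges.mpr ⟨S', mem_erase.mpr ⟨fun h => hrS' (h ▸ hrS), hS'⟩, hvS'⟩⟩
  -- `v = r`: if `S = T` because `r` is the root of `T`, otherwise because `S` has a private vertex
  have hvr : v = r := by
    by_cases hST : S = T
    · subst hST
      exact mem_singleton.mp (hTr hvU)
    · refine card_le_one.mp (card_inter_le_one_of_not_subset (hcard S hSM) (hpriv S hSM)) v hvU r ?_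
      exact mem_inter.mpr ⟨hrS, mem_unionEdges.mpr ⟨T, mem_erase.mpr ⟨Ne.symm hST, hM₀M hT⟩, hrT⟩⟩
  exact hrS' (hvr ▸ hvS')

lemma pairwiseDisjoint_bouquetVerts (hR : IsRootSet M M₀ R) (hcard : ∀ S ∈ M, S.card = 2)
    (hpriv : ∀ S ∈ M, ¬ S ⊆ unionEdges (M.erase S)) (hM₀M : M₀ ⊆ M) :
    (R.image (bouquetAt M) : Set (α × Finset α)).PairwiseDisjoint bouquetVerts := by
  simp only [coe_image]
  rintro _ ⟨r, hr, rfl⟩ _ ⟨r', hr', rfl⟩ hne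
  simp only [Function.onFun]
  rw [bouquetVerts_bouquetAt (hR.incidentEdges_nonempty hM₀M hr),
    bouquetVerts_bouquetAt (hR.incidentEdges_nonempty hM₀M hr')]
  refine disjoint_left.mpr fun v hv hv' => hne ?_
  obtain ⟨S, hS, hvS⟩ := mem_unionEdges.mp hv
  obtain ⟨S', hS', hvS'⟩ := mem_unionEdges.mp hv'
  obtain ⟨hS'M, hr'S'⟩ := mem_incidentEdges.mp hS'
  rw [hR.eq_of_mem_of_mem hcard hpriv hM₀M hS'M hr hr'
    (hR.mem_of_mem_incidentEdges hcard hpriv hM₀M hr hS hS'M hvS hvS') hr'S']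

lemma existsUnique_stem_mem (hR : IsRootSet M M₀ R) (hcard : ∀ S ∈ M, S.card = 2) (hM₀M : M₀ ⊆ M)
    (hdisj : ∀ S ∈ M₀, ∀ T ∈ M₀, S ≠ T → Disjoint S T) (hr : r ∈ R) :
    ∃! S, S ∈ stems (bouquetAt M r) ∧ S ∈ M₀ := by
  rw [stems_bouquetAt hcard]
  obtain ⟨T, hT, hrT, -⟩ := hR.exists_mem_edge hr
  refine ⟨T, ⟨mem_incidentEdges.mpr ⟨hM₀M hT, hrT⟩, hT⟩, fun S ⟨hS, hSM₀⟩ => ?_⟩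
  by_contra hne
  exact disjoint_left.mp (hdisj S hSM₀ T hT hne) (mem_incidentEdges.mp hS).2 hrT

lemma subset_biUnion_stems (hR : IsRootSet M M₀ R) (hcard : ∀ S ∈ M, S.card = 2) (hM₀M : M₀ ⊆ M) :
    M₀ ⊆ (R.image (bouquetAt M)).biUnion stems := by
  intro T hT
  obtain ⟨r, hRT, -⟩ := hR.1 T hT
  obtain ⟨hr, hrT⟩ := mem_inter.mp (hRT ▸ mem_singleton_self r)
  rw [image_biUnion]
  exact mem_biUnion.mpr ⟨r, hr, stems_bouquetAt hcard r ▸ mem_incidentEdges.mpr ⟨hM₀M hT, hrT⟩⟩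

lemma isStronglyDisjointBouquets {E : Finset (Finset α)} (hR : IsRootSet M M₀ R) (hME : M ⊆ E)
    (hcard : ∀ S ∈ M, S.card = 2) (hpriv : ∀ S ∈ M, ¬ S ⊆ unionEdges (M.erase S)) (hM₀M : M₀ ⊆ M)
    (hM₀ : IsInducedMatching E M₀) : IsStronglyDisjointBouquets E (R.image (bouquetAt M)) := by
  obtain ⟨f, hf, himage⟩ := exists_choice_of_existsUnique_stem (N := M₀)
    (fun _ hb => by
      obtain ⟨r, hr, rfl⟩ := mem_image.mp hb
      exact hR.existsUnique_stem_mem hcard hM₀M hM₀.2 hr)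
    (hR.subset_biUnion_stems hcard hM₀M)
  refine ⟨fun b hb => ?_, fun b hb b' hb' => hR.pairwiseDisjoint_bouquetVerts hcard hpriv hM₀M
    (mem_coe.mpr hb) (mem_coe.mpr hb'), f, hf, himage ▸ hM₀⟩
  obtain ⟨r, hr, rfl⟩ := mem_image.mp hb
  exact isBouquet_bouquetAt hME hcard (hR.incidentEdges_nonempty hM₀M hr)

lemma biUnion_stems (hR : IsRootSet M M₀ R) (hcard : ∀ S ∈ M, S.card = 2)
    (hatt : ∀ S ∈ M, S ∉ M₀ → ∃ T ∈ M₀, (S \ T).card = 1) :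
    (R.image (bouquetAt M)).biUnion stems = M := by
  ext S
  simp only [image_biUnion, mem_biUnion, stems_bouquetAt hcard, mem_incidentEdges]
  constructor
  · rintro ⟨r, -, hS, -⟩
    exact hS
  · intro hS
    obtain ⟨r, hr, hrS⟩ := hR.exists_root_mem hcard hatt hS
    exact ⟨r, hr, hS, hrS⟩

end IsRootSet

end

theorem selfDisjoint_eq_stems_of_stronglyDisjointBouquets_general
    (E : Finset (Finset V))
    (h2 : ∀ S ∈ E, S.card = 2)
    (M : Finset (Finset V)) (i j : ℕ)
    (hM : IsSelfDisjointSet E M) (hi : M.card = i)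
    (hj : (unionEdges M).card = i + j) :
    ∃ B : Finset (V × Finset V), IsStronglyDisjointBouquets E B ∧
      (∑ b ∈ B, b.2.card) = i ∧ B.card = j ∧ B.biUnion stems = M := by
  obtain ⟨hME, hpriv, M₀, hM₀M, hM₀, hatt⟩ := hM
  have hcard : ∀ S ∈ M, S.card = 2 := fun S hS => h2 S (hME hS)
  obtain ⟨R, hR⟩ := exists_isRootSet hcard hpriv hM₀M hM₀.2
  have hB := hR.isStronglyDisjointBouquets hME hcard hpriv hM₀M hM₀
  have hstems := hR.biUnion_stems hcard hatt
  have hroot : ∀ b ∈ R.image (bouquetAt M), b.1 ∉ b.2 := fun b hb => (hB.1 b hb).2.1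
  have hflowers : ∑ b ∈ R.image (bouquetAt M), b.2.card = i := by
    rw [sum_card_flowers hroot hB.2.1, hstems, hi]
  refine ⟨_, hB, hflowers, ?_, hstems⟩
  have hverts := card_unionEdges_biUnion_stems (fun b hb => (hB.1 b hb).1) hroot hB.2.1
  rw [hstems, hj, hflowers] at hverts
  omega

/-- if `M` is a self disjoint set in a graph `G` of type
`(i, i + j)`, then `M` is the set of stems of a strongly disjoint set of
bouquets of `G` of type `(i, j)`. -/
theorem selfDisjoint_eq_stems_of_stronglyDisjointBouquets
    (E : Finset (Finset V)) (hH : IsSimpleHypergraph E)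
    (h2 : ∀ S ∈ E, S.card = 2)
    (M : Finset (Finset V)) (i j : ℕ)
    (hM : IsSelfDisjointSet E M) (hi : M.card = i)
    (hj : (unionEdges M).card = i + j) :
    ∃ B : Finset (V × Finset V), IsStronglyDisjointBouquets E B ∧
      (∑ b ∈ B, b.2.card) = i ∧ B.card = j ∧ B.biUnion stems = M :=
  selfDisjoint_eq_stems_of_stronglyDisjointBouquets_general E h2 M i j hM hi hj
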